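/- arXiv:1611.02883 — 6 statements merged into one kernel-verified Lean document; each statement's English description precedes it below -/
import Mathlib

section
/- Let q be a prime power and let R be a commutative algebra over the finite field F_q. Let n, N be positive integers and d_1, …, d_N positive integers. Let π : R → F_{q^n} be a surjective F_q-algebra homomorphism and let Φ : R → F_{q^{d_1}} × ⋯ × F_{q^{d_N}} be an F_q-algebra homomorphism into the product algebra (whose multiplication is the componentwise, i.e. Hadamard, product ⊙). Let V₁ and V₂ be F_q-linear subspaces of R such that π restricts to an F_q-linear bijection ε_i : V_i → F_{q^n} for i = 1, 2, and such that Φ is injective on the F_q-linear span W of the set of products { f·g : f ∈ V₁, g ∈ V₂ }. Then for all x, y ∈ F_{q^n}, the element u = ε₁⁻¹(x) · ε₂⁻¹(y) is the unique element of W satisfying Φ(u) = Φ(ε₁⁻¹(x)) ⊙ Φ(ε₂⁻¹(y)), and x·y = π(u). -/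
/-- The algebraic core of the (possibly asymmetric) Chudnovsky–Chudnovsky-type
multiplication algorithm (Theorem 2.1 / Randriambololona).  `K` plays the role of the
finite field `F_q`, `L` of `F_{q^n}`, `Fd i` of `F_{q^{d_i}}`, `π` of evaluation at the
degree-`n` place and `Φ` of simultaneous evaluation at the places `P_1, …, P_N`. -/
theorem chudnovsky_core
    (K : Type*) [Field K] [Fintype K]
    (R : Type*) [CommRing R] [Algebra K R]
    (L : Type*) [Field L] [Algebra K L]
    (n : ℕ) (hn : 0 < n) (hL : Module.finrank K L = n)
    (N : ℕ) (hN : 0 < N)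
    (d : Fin N → ℕ) (hd : ∀ i, 0 < d i)
    (Fd : Fin N → Type*) [∀ i, Field (Fd i)] [∀ i, Algebra K (Fd i)]
    (hFd : ∀ i, Module.finrank K (Fd i) = d i)
    (π : R →ₐ[K] L) (hπ : Function.Surjective π)
    (Φ : R →ₐ[K] (∀ i, Fd i))
    (V₁ V₂ : Submodule K R)
    (hV₁ : Function.Bijective (fun v : V₁ => π (v : R)))
    (hV₂ : Function.Bijective (fun v : V₂ => π (v : R)))
    (hΦ : Set.InjOn Φ
      (↑(Submodule.span K {r : R | ∃ f ∈ V₁, ∃ g ∈ V₂, r = f * g}) : Set R)) :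
    ∀ x y : L, ∀ v₁ ∈ V₁, ∀ v₂ ∈ V₂, π v₁ = x → π v₂ = y →
      v₁ * v₂ ∈ Submodule.span K {r : R | ∃ f ∈ V₁, ∃ g ∈ V₂, r = f * g} ∧
      Φ (v₁ * v₂) = Φ v₁ * Φ v₂ ∧
      (∀ w ∈ Submodule.span K {r : R | ∃ f ∈ V₁, ∃ g ∈ V₂, r = f * g},
        Φ w = Φ v₁ * Φ v₂ → w = v₁ * v₂) ∧
      x * y = π (v₁ * v₂) := by
  intro x y v₁ hv₁ v₂ hv₂ hx hy
  have hmem : v₁ * v₂ ∈ Submodule.span K {r : R | ∃ f ∈ V₁, ∃ g ∈ V₂, r = f * g} :=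
    Submodule.subset_span ⟨v₁, hv₁, v₂, hv₂, rfl⟩
  refine ⟨hmem, map_mul Φ v₁ v₂, ?_, ?_⟩
  · intro w hw hΦw
    exact hΦ hw hmem (by rw [hΦw, map_mul])
  · rw [map_mul, hx, hy]
end

section
/- Let q be a prime power, R a commutative F_q-algebra, n, N positive integers and d_1, …, d_N positive integers. Suppose π : R → F_{q^n} is a surjective F_q-algebra homomorphism, Φ : R → F_{q^{d_1}} × ⋯ × F_{q^{d_N}} is an F_q-algebra homomorphism, and V₁, V₂ are F_q-subspaces of R such that π restricts to a bijection from V_i onto F_{q^n} for i = 1, 2, and Φ is injective on the F_q-linear span of { f·g : f ∈ V₁, g ∈ V₂ }. If, for each i ∈ {1, …, N}, multiplication in F_{q^{d_i}} over F_q admits a bilinear multiplication algorithm with r_i bilinear multiplications, then multiplication in F_{q^n} over F_q admits a bilinear multiplication algorithm with r_1 + r_2 + ⋯ + r_N bilinear multiplications. In particular, the bilinear complexity satisfies μ_q(n) ≤ Σ_{i=1}^N μ_q(d_i). -/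
/-- `A` (an `F_q`-algebra, with `K` playing the role of `F_q`) admits a bilinear
multiplication algorithm of bilinear complexity `r`: there are `K`-linear forms
`xs i, ys i : A → K` and constants `c i ∈ A` with `a * b = ∑ i, xs i a * ys i b • c i`. -/
def HasBilinearMulAlg (K A : Type*) [Field K] [CommRing A] [Algebra K A] (r : ℕ) : Prop :=
  ∃ (xs ys : Fin r → (A →ₗ[K] K)) (c : Fin r → A),
    ∀ a b : A, a * b = ∑ i, (xs i a * ys i b) • c i

/-- The bilinear complexity `μ_q(·)`: the minimal number of bilinear multiplications. -/
noncomputable def bilinearComplexity (K A : Type*) [Field K] [CommRing A] [Algebra K A] : ℕ :=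
  sInf {r | HasBilinearMulAlg K A r}

/-- Main auxiliary lemma: the Chudnovsky–Chudnovsky construction. -/
lemma chud_aux {K : Type*} [Field K]
    {R : Type*} [CommRing R] [Algebra K R]
    {L : Type*} [Field L] [Algebra K L]
    {N : ℕ} {Fd : Fin N → Type*} [∀ i, Field (Fd i)] [∀ i, Algebra K (Fd i)]
    (π : R →ₐ[K] L)
    (Φ : R →ₐ[K] (∀ i, Fd i))
    (V₁ V₂ : Submodule K R)
    (hV₁ : Function.Bijective (fun v : V₁ => π (v : R)))
    (hV₂ : Function.Bijective (fun v : V₂ => π (v : R)))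
    (hΦ : Set.InjOn Φ
      (↑(Submodule.span K {r : R | ∃ f ∈ V₁, ∃ g ∈ V₂, r = f * g}) : Set R))
    (r : Fin N → ℕ) (hr : ∀ i, HasBilinearMulAlg K (Fd i) (r i)) :
    HasBilinearMulAlg K L (∑ i, r i) := by
  classical
  choose xs ys c hc using hr
  set W := Submodule.span K {r : R | ∃ f ∈ V₁, ∃ g ∈ V₂, r = f * g} with hWdef
  -- linear sections of π on V₁ and V₂
  let e₁ : V₁ ≃ₗ[K] L := LinearEquiv.ofBijective (π.toLinearMap.domRestrict V₁) hV₁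
  let e₂ : V₂ ≃ₗ[K] L := LinearEquiv.ofBijective (π.toLinearMap.domRestrict V₂) hV₂
  let σ₁ : L →ₗ[K] R := V₁.subtype ∘ₗ e₁.symm.toLinearMap
  let σ₂ : L →ₗ[K] R := V₂.subtype ∘ₗ e₂.symm.toLinearMap
  have hσ₁ : ∀ a : L, π (σ₁ a) = a := fun a => e₁.apply_symm_apply a
  have hσ₂ : ∀ a : L, π (σ₂ a) = a := fun a => e₂.apply_symm_apply a
  have hσ₁mem : ∀ a : L, σ₁ a ∈ V₁ := fun a => (e₁.symm a).2
  have hσ₂mem : ∀ a : L, σ₂ a ∈ V₂ := fun a => (e₂.symm a).2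
  -- a linear retraction ψ of Φ on W, composed with π
  have hinj : Function.Injective (Φ.toLinearMap.domRestrict W) := by
    intro x y h
    exact Subtype.ext (hΦ x.2 y.2 h)
  obtain ⟨ρ, hρ⟩ := (Φ.toLinearMap.domRestrict W).exists_leftInverse_of_injective
    (LinearMap.ker_eq_bot.mpr hinj)
  let ψ : (∀ i, Fd i) →ₗ[K] L := π.toLinearMap ∘ₗ W.subtype ∘ₗ ρ
  have hψ : ∀ w ∈ W, ψ (Φ w) = π w := by
    intro w hw
    have h1 : ρ (Φ.toLinearMap.domRestrict W ⟨w, hw⟩) = ⟨w, hw⟩ := LinearMap.congr_fun hρ ⟨w, hw⟩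
    have h2 : ((ρ (Φ w) : W) : R) = w := congrArg Subtype.val h1
    show π ((ρ (Φ w) : W) : R) = π w
    rw [h2]
  -- the combined family of linear forms and constants
  let X : (Σ i : Fin N, Fin (r i)) → (L →ₗ[K] K) :=
    fun p => (xs p.1 p.2) ∘ₗ (LinearMap.proj p.1) ∘ₗ Φ.toLinearMap ∘ₗ σ₁
  let Y : (Σ i : Fin N, Fin (r i)) → (L →ₗ[K] K) :=
    fun p => (ys p.1 p.2) ∘ₗ (LinearMap.proj p.1) ∘ₗ Φ.toLinearMap ∘ₗ σ₂
  let C : (Σ i : Fin N, Fin (r i)) → L := fun p => ψ (Pi.single p.1 (c p.1 p.2))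
  have key : ∀ a b : L, a * b = ∑ p : Σ i : Fin N, Fin (r i), (X p a * Y p b) • C p := by
    intro a b
    have hmem : σ₁ a * σ₂ b ∈ W :=
      Submodule.subset_span ⟨σ₁ a, hσ₁mem a, σ₂ b, hσ₂mem b, rfl⟩
    calc a * b = π (σ₁ a) * π (σ₂ b) := by rw [hσ₁, hσ₂]
      _ = π (σ₁ a * σ₂ b) := (map_mul π _ _).symm
      _ = ψ (Φ (σ₁ a * σ₂ b)) := (hψ _ hmem).symm
      _ = ψ (∑ i, Pi.single i (Φ (σ₁ a) i * Φ (σ₂ b) i)) := by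
            rw [map_mul]
            congr 1
            exact (Finset.univ_sum_single _).symm
      _ = ∑ i, (ψ ∘ₗ LinearMap.single K Fd i)
              (∑ j, (xs i j (Φ (σ₁ a) i) * ys i j (Φ (σ₂ b) i)) • c i j) := by
            rw [map_sum]
            refine Finset.sum_congr rfl fun i _ => ?_
            rw [← hc i]
            rfl
      _ = ∑ i, ∑ j, (xs i j (Φ (σ₁ a) i) * ys i j (Φ (σ₂ b) i)) •
              ψ (Pi.single i (c i j)) := by
            refine Finset.sum_congr rfl fun i _ => ?_
            rw [map_sum]
            refine Finset.sum_congr rfl fun j _ => ?_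
            rw [map_smul]
            rfl
      _ = ∑ p : Σ i : Fin N, Fin (r i), (X p a * Y p b) • C p := by
            rw [← Finset.univ_sigma_univ, Finset.sum_sigma]
            rfl
  let e : (Σ i : Fin N, Fin (r i)) ≃ Fin (∑ i, r i) := Fintype.equivFinOfCardEq (by simp)
  refine ⟨fun k => X (e.symm k), fun k => Y (e.symm k), fun k => C (e.symm k), fun a b => ?_⟩
  rw [key a b]
  exact (Equiv.sum_comp e.symm fun p => (X p a * Y p b) • C p).symm

/-- Bilinear-complexity conclusion of the (possibly asymmetric) Chudnovsky–Chudnovsky-type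
algorithm: if each `F_{q^{d_i}}` (modelled by `Fd i`) has a bilinear multiplication
algorithm with `r i` multiplications, then `F_{q^n}` (modelled by `L`) has one with
`∑ i, r i` multiplications; in particular `μ_q(n) ≤ ∑ i, μ_q(d_i)`. -/
theorem chudnovsky_bilinear_complexity
    (K : Type*) [Field K] [Fintype K]
    (R : Type*) [CommRing R] [Algebra K R]
    (L : Type*) [Field L] [Algebra K L]
    (n : ℕ) (hn : 0 < n) (hL : Module.finrank K L = n)
    (N : ℕ) (hN : 0 < N)
    (d : Fin N → ℕ) (hd : ∀ i, 0 < d i)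
    (Fd : Fin N → Type*) [∀ i, Field (Fd i)] [∀ i, Algebra K (Fd i)]
    (hFd : ∀ i, Module.finrank K (Fd i) = d i)
    (π : R →ₐ[K] L) (hπ : Function.Surjective π)
    (Φ : R →ₐ[K] (∀ i, Fd i))
    (V₁ V₂ : Submodule K R)
    (hV₁ : Function.Bijective (fun v : V₁ => π (v : R)))
    (hV₂ : Function.Bijective (fun v : V₂ => π (v : R)))
    (hΦ : Set.InjOn Φ
      (↑(Submodule.span K {r : R | ∃ f ∈ V₁, ∃ g ∈ V₂, r = f * g}) : Set R))
    (r : Fin N → ℕ) (hr : ∀ i, HasBilinearMulAlg K (Fd i) (r i)) :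
    HasBilinearMulAlg K L (∑ i, r i) ∧
      bilinearComplexity K L ≤ ∑ i, bilinearComplexity K (Fd i) := by
  refine ⟨chud_aux π Φ V₁ V₂ hV₁ hV₂ hΦ r hr, ?_⟩
  have h2 : HasBilinearMulAlg K L (∑ i, bilinearComplexity K (Fd i)) :=
    chud_aux π Φ V₁ V₂ hV₁ hV₂ hΦ _ (fun i => Nat.sInf_mem (s := {r | HasBilinearMulAlg K (Fd i) r}) ⟨r i, hr i⟩)
  exact Nat.sInf_le (by exact h2)
end

section
/- Let K be the finite field with 4 elements and L the finite field with 256 elements, viewed as a K-algebra (the degree-4 extension of K). Then there exist K-linear forms x_1^*, …, x_10^*, y_1^*, …, y_10^* : L → K and elements c_1, …, c_10 ∈ L such that for all x, y ∈ L, x·y = Σ_{i=1}^{10} x_i^*(x) y_i^*(y) c_i. In particular, the bilinear complexity of multiplication in F_{4^4} over F_4 is at most 10. -/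
/-!
As `K` is finite, `L/K` is separable and has a primitive element `α`; multiplication in `L` is multiplication of
polynomials of degree `< 4` in `α` followed by reduction. Two levels of Karatsuba's trick
(split into even and odd parts, then once more) multiply two such polynomials with
`3 · 3 = 9` products of linear forms in the coordinates, and a zero tenth product pads
the algorithm to length 10.
-/

open Finset

def HasBilinearMulAlgorithm (K L ι : Type*) [CommRing K] [CommRing L] [Algebra K L]
    [Fintype ι] : Prop :=
  ∃ (xs ys : ι → (L →ₗ[K] K)) (c : ι → L), ∀ x y : L, x * y = ∑ i, (xs i x * ys i y) • c i

namespace HasBilinearMulAlgorithm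

variable {K L ι κ : Type*} [CommRing K] [CommRing L] [Algebra K L] [Fintype ι] [Fintype κ]

theorem of_equiv (h : HasBilinearMulAlgorithm K L ι) (e : ι ≃ κ) :
    HasBilinearMulAlgorithm K L κ := by
  obtain ⟨xs, ys, c, hmul⟩ := h
  refine ⟨xs ∘ e.symm, ys ∘ e.symm, c ∘ e.symm, fun x y => ?_⟩
  rw [hmul]
  exact Fintype.sum_equiv e _ _ fun i => by simp

theorem option (h : HasBilinearMulAlgorithm K L ι) : HasBilinearMulAlgorithm K L (Option ι) := by
  obtain ⟨xs, ys, c, hmul⟩ := h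
  refine ⟨fun i => i.elim 0 xs, fun i => i.elim 0 ys, fun i => i.elim 0 c, fun x y => ?_⟩
  simp [Fintype.sum_option, hmul]

end HasBilinearMulAlgorithm

section Karatsuba

def karatsuba {M : Type*} [Add M] (a₀ a₁ : M) : Fin 3 → M :=
  ![a₀, a₁, a₀ + a₁]

def karatsubaWeight {R : Type*} [CommRing R] (t : R) : Fin 3 → R :=
  ![1 - t, t ^ 2 - t, t]

theorem map_karatsuba {M N F : Type*} [AddCommMonoid M] [AddCommMonoid N] [FunLike F M N]
    [AddMonoidHomClass F M N] (φ : F) (a₀ a₁ : M) (i : Fin 3) :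
    φ (karatsuba a₀ a₁ i) = karatsuba (φ a₀) (φ a₁) i := by
  fin_cases i <;> simp [karatsuba]

theorem karatsuba_linearMap_apply {K M : Type*} [CommRing K] [AddCommGroup M] [Module K M]
    (f g : M →ₗ[K] K) (x : M) (i : Fin 3) :
    karatsuba f g i x = karatsuba (f x) (g x) i := by
  fin_cases i <;> simp [karatsuba]

variable {R : Type*} [CommRing R]

theorem karatsuba_add_mul (a₀ a₁ b₀ b₁ t : R) (i : Fin 3) :
    karatsuba (a₀ + a₁ * t) (b₀ + b₁ * t) i = karatsuba a₀ b₀ i + karatsuba a₁ b₁ i * t := by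
  fin_cases i
  · rfl
  · rfl
  · show a₀ + a₁ * t + (b₀ + b₁ * t) = a₀ + b₀ + (a₁ + b₁) * t
    ring

theorem karatsuba_mul (a₀ a₁ b₀ b₁ t : R) :
    (a₀ + a₁ * t) * (b₀ + b₁ * t) =
      ∑ i, karatsuba a₀ a₁ i * karatsuba b₀ b₁ i * karatsubaWeight t i := by
  simp only [karatsuba, karatsubaWeight, Fin.sum_univ_three, Fin.isValue, Matrix.cons_val_zero,
    Matrix.cons_val_one, Matrix.cons_val]
  ring

theorem karatsuba_mul_karatsuba (a b : Fin 4 → R) (t : R) :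
    (∑ k, a k * t ^ (k : ℕ)) * (∑ k, b k * t ^ (k : ℕ)) =
      ∑ i, ∑ j, karatsuba (karatsuba (a 0) (a 1) i) (karatsuba (a 2) (a 3) i) j *
        karatsuba (karatsuba (b 0) (b 1) i) (karatsuba (b 2) (b 3) i) j *
          (karatsubaWeight t i * karatsubaWeight (t ^ 2) j) := by
  have even_odd : ∀ c : Fin 4 → R,
      ∑ k, c k * t ^ (k : ℕ) = (c 0 + c 2 * t ^ 2) + (c 1 + c 3 * t ^ 2) * t := by
    intro c
    simp only [Fin.sum_univ_four, Fin.isValue, Fin.coe_ofNat_eq_mod, Nat.zero_mod, pow_zero,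
      mul_one, Nat.one_mod, pow_one, Nat.reduceMod, Nat.mod_succ]
    ring
  rw [even_odd, even_odd, karatsuba_mul]
  refine sum_congr rfl fun i _ => ?_
  rw [karatsuba_add_mul, karatsuba_add_mul, karatsuba_mul, sum_mul]
  exact sum_congr rfl fun j _ => by ring

end Karatsuba

theorem hasBilinearMulAlgorithm_of_basis_pow {K L : Type*} [CommRing K] [CommRing L]
    [Algebra K L] (b : Module.Basis (Fin 4) K L) (α : L) (hb : ∀ k, b k = α ^ (k : ℕ)) :
    HasBilinearMulAlgorithm K L (Fin 3 × Fin 3) := by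
  let u : Fin 3 × Fin 3 → (L →ₗ[K] K) := fun p =>
    karatsuba (karatsuba (b.coord 0) (b.coord 1) p.1) (karatsuba (b.coord 2) (b.coord 3) p.1) p.2
  refine ⟨u, u, fun p => karatsubaWeight α p.1 * karatsubaWeight (α ^ 2) p.2, fun x y => ?_⟩
  have expand : ∀ z : L, z = ∑ k, algebraMap K L (b.coord k z) * α ^ (k : ℕ) := by
    intro z
    conv_lhs => rw [← b.sum_repr z]
    simp [hb, Algebra.smul_def]
  conv_lhs => rw [expand x, expand y, karatsuba_mul_karatsuba]
  simp only [Fintype.sum_prod_type, u, Algebra.smul_def, map_mul, karatsuba_linearMap_apply,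
    map_karatsuba]

theorem bilinear_mul_F4_4_general
    (K : Type*) [Field K] [Fintype K]
    (L : Type*) [Field L] [Algebra K L] (hL : Module.finrank K L = 4) :
    ∃ (xs ys : Fin 10 → (L →ₗ[K] K)) (c : Fin 10 → L),
      ∀ x y : L, x * y = ∑ i, (xs i x * ys i y) • c i := by
  have : FiniteDimensional K L := .of_finrank_eq_succ hL
  let pb := Field.powerBasisOfFiniteOfSeparable K L
  have hdim : pb.dim = 4 := by rw [← pb.finrank, hL]
  have h9 := hasBilinearMulAlgorithm_of_basis_pow (pb.basis.reindex (finCongr hdim)) pb.gen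
    fun k => by simp [Module.Basis.reindex_apply]
  exact h9.option.of_equiv (Fintype.equivFinOfCardEq rfl)

/-- Multiplication in `F_{4^4} = F_256` (modelled by `L`, the degree-4 extension of the
field `K` with 4 elements) admits a bilinear multiplication algorithm with 10 bilinear
multiplications; in particular the bilinear complexity of `F_{4^4}` over `F_4` is at
most 10. -/
theorem bilinear_mul_F4_4
    (K : Type*) [Field K] [Fintype K] (hK : Fintype.card K = 4)
    (L : Type*) [Field L] [Algebra K L] (hL : Module.finrank K L = 4) :
    ∃ (xs ys : Fin 10 → (L →ₗ[K] K)) (c : Fin 10 → L),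
      ∀ x y : L, x * y = ∑ i, (xs i x * ys i y) • c i :=
  bilinear_mul_F4_4_general K L hL
end

section
/- Suppose multiplication in F_{16} over F_4 (the degree-2 extension of the field with 4 elements) admits a bilinear multiplication algorithm with r bilinear multiplications. Then multiplication in F_{4^5} over F_4 admits a bilinear multiplication algorithm with 9 + r bilinear multiplications: there exist F_4-linear forms x_i^*, y_i^* on F_{4^5} and elements c_i ∈ F_{4^5}, for 1 ≤ i ≤ 9 + r, such that x·y = Σ_{i=1}^{9+r} x_i^*(x) y_i^*(y) c_i for all x, y ∈ F_{4^5}. In particular, μ_4(5) ≤ 9·μ_4(1) + μ_4(2) = 9 + μ_4(2). -/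
/-!
Write elements of `L` as polynomials of degree `≤ 4` in a primitive element `g`. Over
`𝔽₄ = {0, 1, ω, ω²}` the product of two such polynomials, of degree `≤ 8`, is determined by nine
conditions: its values at the four points of `𝔽₄`, its coefficient of `x⁸` (the place at
infinity), and its residues modulo the irreducible quadratics `x² + x + ω` and `x² + x + ω²`.
Each residue is a product in `𝔽₁₆`, computed by Karatsuba with three multiplications, so
`4 + 1 + 3 + 3 = 11` products suffice; and `11 ≤ 9 + r` because an algorithm for `𝔽₁₆` needs
at least `dim 𝔽₁₆ = 2` products.
-/

open Matrix

namespace HasBilinearMulAlg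

variable {K A : Type*} [Field K] [CommRing A] [Algebra K A] {m n : ℕ}

theorem mono (h : HasBilinearMulAlg K A m) (hmn : m ≤ n) : HasBilinearMulAlg K A n := by
  obtain ⟨k, rfl⟩ := Nat.exists_eq_add_of_le hmn
  obtain ⟨xs, ys, c, h⟩ := h
  refine ⟨Fin.append xs 0, Fin.append ys 0, Fin.append c 0, fun a b => ?_⟩
  simp [h a b, Fin.sum_univ_add]

theorem finrank_le (h : HasBilinearMulAlg K A n) : Module.finrank K A ≤ n := by
  obtain ⟨xs, ys, c, h⟩ := h
  have hspan : Submodule.span K (Set.range c) = ⊤ := by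
    refine Submodule.eq_top_iff'.mpr fun a => ?_
    rw [← mul_one a, h a 1]
    exact Submodule.sum_mem _ fun i _ => Submodule.smul_mem _ _ (Submodule.subset_span ⟨i, rfl⟩)
  simpa using finrank_le_of_span_eq_top hspan

theorem of_basis {ι : Type*} [Fintype ι] (b : Module.Basis ι K A) (Λ : Matrix (Fin n) ι K)
    (c : Fin n → A)
    (h : ∀ x y : ι → K,
      (∑ i, x i • b i) * (∑ i, y i • b i) = ∑ k, ((Λ *ᵥ x) k * (Λ *ᵥ y) k) • c k) :
    HasBilinearMulAlg K A n := by
  let φ : Fin n → A →ₗ[K] K := fun k => LinearMap.proj k ∘ₗ Λ.mulVecLin ∘ₗ b.equivFun.toLinearMap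
  refine ⟨φ, φ, c, fun a a' => ?_⟩
  simpa [φ, b.sum_equivFun] using h (b.equivFun a) (b.equivFun a')

end HasBilinearMulAlg

section FieldOfFourElements

variable {K : Type*} [Field K] [Fintype K]

theorem two_eq_zero_of_card_eq_four (hK : Fintype.card K = 4) : (2 : K) = 0 := by
  have h4 : ((4 : ℕ) : K) = 0 := hK ▸ FiniteField.cast_card_eq_zero K
  exact mul_self_eq_zero.mp (by norm_num at h4 ⊢; linear_combination h4)

theorem exists_sq_eq_add_one_of_card_eq_four (hK : Fintype.card K = 4) :
    ∃ ω : K, ω ^ 2 = ω + 1 := by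
  classical
  obtain ⟨ω, -, hω⟩ : ∃ ω ∈ Finset.univ, ω ∉ ({0, 1} : Finset K) :=
    Finset.exists_mem_notMem_of_card_lt_card
      ((Finset.card_le_two).trans_lt (by simp [Finset.card_univ, hK]))
  refine ⟨ω, ?_⟩
  simp only [Finset.mem_insert, Finset.mem_singleton, not_or] at hω
  have hω4 : ω ^ 4 = ω := hK ▸ FiniteField.pow_card ω
  have hfac : ω * (ω - 1) * (ω ^ 2 + ω + 1) = 0 := by linear_combination hω4
  rcases mul_eq_zero.mp hfac with h | h
  · rcases mul_eq_zero.mp h with h | h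
    · exact absurd h hω.1
    · exact absurd (sub_eq_zero.mp h) hω.2
  · linear_combination h - (ω + 1) * two_eq_zero_of_card_eq_four hK

end FieldOfFourElements

section Interpolation

variable {R : Type*} [CommRing R]

/-- Row `k` computes the `k`-th factor from the coefficients of `p`: `p(0)`, `p(1)`, `p(ω)`,
`p(ω²)`, the coefficient of `x⁴`, then `u`, `v`, `u + v` for the residue `u + v x` of `p` modulo
`x² + x + ω`, and the same modulo `x² + x + ω²`. -/
def interpolationForms (w : R) : Matrix (Fin 11) (Fin 5) R :=
  !![1, 0, 0, 0, 0;
     1, 1, 1, 1, 1;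
     1, w, w + 1, 1, w;
     1, w + 1, w, 1, w + 1;
     0, 0, 0, 0, 1;
     1, 0, w, w, 1;
     0, 1, 1, w + 1, 1;
     1, 1, w + 1, 1, 0;
     1, 0, w + 1, w + 1, 1;
     0, 1, 1, w, 1;
     1, 1, w, 1, 0]

/-- The Chinese-remainder solutions for the conditions of `interpolationForms`, evaluated at `g`;
the one for the place at infinity is `x⁸ + x⁴ + x² + x`, which vanishes at the finite places. -/
def interpolationCoeffs (w g : R) : Fin 11 → R :=
  ![1 + g + g ^ 3 + g ^ 7,
    g + g ^ 4 + g ^ 5 + g ^ 6 + g ^ 7,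
    (w + 1) * g + g ^ 2 + (w + 1) * g ^ 3 + g ^ 4 + (w + 1) * g ^ 5 + w * g ^ 6 + g ^ 7,
    w * g + g ^ 2 + w * g ^ 3 + g ^ 4 + w * g ^ 5 + (w + 1) * g ^ 6 + g ^ 7,
    g + g ^ 2 + g ^ 4 + g ^ 8,
    (w + 1) * g + w * g ^ 2 + w * g ^ 4 + w * g ^ 5 + g ^ 7,
    g + w * g ^ 2 + w * g ^ 3 + g ^ 4 + w * g ^ 5 + w * g ^ 6,
    (w + 1) * g ^ 2 + g ^ 3 + g ^ 4 + (w + 1) * g ^ 5 + g ^ 6 + g ^ 7,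
    w * g + (w + 1) * g ^ 2 + (w + 1) * g ^ 4 + (w + 1) * g ^ 5 + g ^ 7,
    g + (w + 1) * g ^ 2 + (w + 1) * g ^ 3 + g ^ 4 + (w + 1) * g ^ 5 + (w + 1) * g ^ 6,
    w * g ^ 2 + g ^ 3 + g ^ 4 + w * g ^ 5 + g ^ 6 + g ^ 7]

theorem interpolationForms_map {S : Type*} [CommRing S] (f : R →+* S) (w : R) :
    (interpolationForms w).map f = interpolationForms (f w) := by
  ext i j
  fin_cases i <;> fin_cases j <;> simp [interpolationForms]

set_option maxRecDepth 100000 in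
theorem sum_mul_sum_eq_interpolation {w : R} (h2 : (2 : R) = 0) (hw : w ^ 2 = w + 1)
    (g : R) (a b : Fin 5 → R) :
    (∑ i, a i * g ^ (i : ℕ)) * (∑ i, b i * g ^ (i : ℕ)) =
      ∑ k, (interpolationForms w *ᵥ a) k * (interpolationForms w *ᵥ b) k *
        interpolationCoeffs w g k := by
  simp only [Fin.sum_univ_succ, Fin.sum_univ_zero, mulVec, dotProduct, interpolationForms,
    interpolationCoeffs, of_apply, cons_val', cons_val_zero, cons_val_succ, empty_val',
    cons_val_fin_one, Fin.val_zero, Fin.val_succ]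
  grind

end Interpolation

theorem PowerBasis.hasBilinearMulAlg_eleven {K A : Type*} [Field K] [CommRing A] [Algebra K A]
    (pb : PowerBasis K A) (hdim : pb.dim = 5) {ω : K} (h2 : (2 : K) = 0)
    (hω : ω ^ 2 = ω + 1) : HasBilinearMulAlg K A 11 := by
  let b := pb.basis.reindex (finCongr hdim)
  have hb : ∀ i, b i = pb.gen ^ (i : ℕ) := by simp [b]
  refine .of_basis b (interpolationForms ω) (interpolationCoeffs (algebraMap K A ω) pb.gen)
    fun x y => ?_
  have key := sum_mul_sum_eq_interpolation (by rw [← map_ofNat (algebraMap K A) 2, h2, map_zero])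
    (by simpa using congr_arg (algebraMap K A) hω) pb.gen (algebraMap K A ∘ x)
    (algebraMap K A ∘ y)
  simp only [hb, Algebra.smul_def, map_mul, RingHom.map_mulVec, interpolationForms_map]
  exact key

/-- Section 6 of the paper: interpolating at 9 rational places and 1 place of degree 2 of
the optimal genus-2 curve `y² + y = x/(x³+x+1)` over `F_4`, any bilinear multiplication
algorithm for `F_16` over `F_4` (modelled by `M`, the degree-2 extension of the field `K`
with 4 elements) with `r` bilinear multiplications yields one for `F_{4^5}` (modelled by
`L`) with `9 + r` bilinear multiplications; in particular `μ_4(5) ≤ 9 + μ_4(2)`. -/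
theorem bilinear_mul_F4_5
    (K : Type*) [Field K] [Fintype K] (hK : Fintype.card K = 4)
    (M : Type*) [Field M] [Algebra K M] (hM : Module.finrank K M = 2)
    (L : Type*) [Field L] [Algebra K L] (hL : Module.finrank K L = 5)
    (r : ℕ) (hr : HasBilinearMulAlg K M r) :
    HasBilinearMulAlg K L (9 + r) := by
  obtain ⟨ω, hω⟩ := exists_sq_eq_add_one_of_card_eq_four hK
  have : FiniteDimensional K L := Module.finite_of_finrank_eq_succ hL
  let pb := Field.powerBasisOfFiniteOfSeparable K L
  have h11 : HasBilinearMulAlg K L 11 :=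
    pb.hasBilinearMulAlg_eleven (by rw [← pb.finrank, hL]) (two_eq_zero_of_card_eq_four hK) hω
  have h2r : 2 ≤ r := hM ▸ hr.finrank_le
  exact h11.mono (by omega)
end

section
/- Suppose multiplication in F_4 over F_2 admits a bilinear multiplication algorithm with r₂ bilinear multiplications and multiplication in F_{16} over F_2 admits a bilinear multiplication algorithm with r₄ bilinear multiplications. Then multiplication in F_{2^5} = F_{32} over F_2 admits a bilinear multiplication algorithm with 3 + 2·r₂ + r₄ bilinear multiplications: there exist F_2-linear forms x_i^*, y_i^* on F_{32} and elements c_i ∈ F_{32}, for 1 ≤ i ≤ 3 + 2r₂ + r₄, such that x·y = Σ_i x_i^*(x) y_i^*(y) c_i for all x, y ∈ F_{32}. In particular, μ_2(5) ≤ 3·μ_2(1) + 2·μ_2(2) + μ_2(4). -/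
open Polynomial Module

namespace HasBilinearMulAlg

variable {K A B : Type*} [Field K] [CommRing A] [Algebra K A] [CommRing B] [Algebra K B]
  {r s : ℕ}

theorem self : HasBilinearMulAlg K K 1 :=
  ⟨fun _ => LinearMap.id, fun _ => LinearMap.id, fun _ => 1, fun a b => by simp⟩

theorem prod (hA : HasBilinearMulAlg K A r) (hB : HasBilinearMulAlg K B s) :
    HasBilinearMulAlg K (A × B) (r + s) := by
  obtain ⟨xs, ys, c, hc⟩ := hA
  obtain ⟨xs', ys', c', hc'⟩ := hB
  refine ⟨Fin.append (fun i => xs i ∘ₗ .fst K A B) (fun j => xs' j ∘ₗ .snd K A B),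
    Fin.append (fun i => ys i ∘ₗ .fst K A B) (fun j => ys' j ∘ₗ .snd K A B),
    Fin.append (fun i => (c i, 0)) (fun j => (0, c' j)), fun a b => ?_⟩
  ext <;> simp [Fin.sum_univ_add, Prod.fst_sum, Prod.snd_sum, hc a.1 b.1, hc' a.2 b.2]

theorem mono_s8 (h : HasBilinearMulAlg K A r) (hrs : r ≤ s) : HasBilinearMulAlg K A s := by
  obtain ⟨k, rfl⟩ := Nat.exists_eq_add_of_le hrs
  obtain ⟨xs, ys, c, hc⟩ := h
  exact ⟨Fin.append xs 0, Fin.append ys 0, Fin.append c 0, fun a b => by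
    simp [Fin.sum_univ_add, hc a b]⟩

theorem of_mul_factors_through (σ : A →ₗ[K] B) (π : B →ₗ[K] A)
    (hσπ : ∀ x y, π (σ x * σ y) = x * y) (h : HasBilinearMulAlg K B r) :
    HasBilinearMulAlg K A r := by
  obtain ⟨xs, ys, c, hc⟩ := h
  exact ⟨fun i => xs i ∘ₗ σ, fun i => ys i ∘ₗ σ, fun i => π (c i), fun a b => by
    simp [← hσπ a b, hc (σ a) (σ b)]⟩

end HasBilinearMulAlg

theorem mem_degreeLT_add_one {R : Type*} [Semiring R] {p : R[X]} {n : ℕ} :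
    p ∈ degreeLT R (n + 1) ↔ p.natDegree ≤ n := by
  rw [mem_degreeLT, degree_lt_iff_coeff_zero, natDegree_le_iff_coeff_eq_zero]
  rfl

theorem exists_minpoly_natDegree_eq_finrank (K E : Type*) [Field K] [Field E] [Algebra K E]
    [FiniteDimensional K E] [Algebra.IsSeparable K E] :
    ∃ α : E, (minpoly K α).natDegree = finrank K E :=
  let ⟨α, hα⟩ := Field.exists_primitive_element K E
  ⟨α, (Field.primitive_element_iff_minpoly_natDegree_eq K α).1 hα⟩

section Interpolation

variable {K E F L : Type*} [Field K] [Field E] [Algebra K E] [Field F] [Algebra K F]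
  [Field L] [Algebra K L]

theorem finrank_degreeLT (n : ℕ) : finrank K (degreeLT K n) = n := by
  rw [(degreeLTEquiv K n).finrank_eq, finrank_fin_fun]

theorem aeval_injective_degreeLT {γ : L} {n : ℕ} (hγ : (minpoly K γ).natDegree = n) :
    Function.Injective ((aeval γ).toLinearMap ∘ₗ (degreeLT K n).subtype) := by
  refine (injective_iff_map_eq_zero _).2 fun ⟨R, hR⟩ h => Subtype.ext (show R = 0 from ?_)
  by_contra hR0
  have hlt := (natDegree_lt_iff_degree_lt hR0).2 (mem_degreeLT.1 hR)
  have hle := natDegree_le_natDegree (minpoly.degree_le_of_ne_zero K γ hR0 h)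
  omega

/-- Evaluation at the rational places `0`, `1`, `∞` of the projective line and at the closed
points given by `α` and `β`; on polynomials of degree at most `n`, the value at `∞` is the
`n`-th coefficient. -/
noncomputable def evalPlaces (n : ℕ) (α : E) (β : F) : K[X] →ₗ[K] K × K × K × E × F :=
  (leval 0).prod ((leval 1).prod ((lcoeff K n).prod
    ((aeval α).toLinearMap.prod (aeval β).toLinearMap)))

theorem evalPlaces_mul (α : E) (β : F) {m n : ℕ} {P Q : K[X]} (hP : P.natDegree ≤ m)
    (hQ : Q.natDegree ≤ n) :
    evalPlaces (m + n) α β (P * Q) = evalPlaces m α β P * evalPlaces n α β Q := by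
  simp [evalPlaces, coeff_mul_add_eq_of_natDegree_le hP hQ]

theorem isIntegral_of_natDegree_minpoly_ne_zero {α : E} (h : (minpoly K α).natDegree ≠ 0) :
    IsIntegral K α :=
  minpoly.ne_zero_iff.1 fun h0 => h (by rw [h0, natDegree_zero])

theorem isCoprime_of_natDegree_lt {p q : K[X]} (hp : Irreducible p) (hq : q ≠ 0)
    (h : q.natDegree < p.natDegree) : IsCoprime q p :=
  (hp.coprime_iff_not_dvd.2 fun hpq => (natDegree_le_of_dvd hpq hq).not_gt h).symm

theorem dvd_of_evalPlaces_eq_zero {α : E} {β : F} (hα : 1 < (minpoly K α).natDegree)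
    (hαβ : (minpoly K α).natDegree < (minpoly K β).natDegree) {n : ℕ} {R : K[X]}
    (h : evalPlaces n α β R = 0) : X * (X - C 1) * minpoly K α * minpoly K β ∣ R := by
  obtain ⟨h0, h1, -, hα', hβ'⟩ : eval 0 R = 0 ∧ eval 1 R = 0 ∧ R.coeff n = 0 ∧
      aeval α R = 0 ∧ aeval β R = 0 := by
    simpa [evalPlaces] using h
  have intα := isIntegral_of_natDegree_minpoly_ne_zero (K := K) (α := α) (by omega)
  have irrα := minpoly.irreducible intα
  have irrβ := minpoly.irreducible (isIntegral_of_natDegree_minpoly_ne_zero (K := K) (α := β)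
    (by omega))
  have hX : IsCoprime (X : K[X]) (X - C 1) := by
    simpa using isCoprime_X_sub_C_of_isUnit_sub (R := K) (a := 0) (b := 1) (by simp)
  have hXα : IsCoprime (X * (X - C 1)) (minpoly K α) :=
    (isCoprime_of_natDegree_lt irrα X_ne_zero (by rwa [natDegree_X])).mul_left
      (isCoprime_of_natDegree_lt irrα (X_sub_C_ne_zero 1) (by rwa [natDegree_X_sub_C]))
  have hXαβ : IsCoprime (X * (X - C 1) * minpoly K α) (minpoly K β) :=
    ((isCoprime_of_natDegree_lt irrβ X_ne_zero (by rw [natDegree_X]; omega)).mul_left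
        (isCoprime_of_natDegree_lt irrβ (X_sub_C_ne_zero 1)
          (by rw [natDegree_X_sub_C]; omega))).mul_left
      (isCoprime_of_natDegree_lt irrβ (minpoly.ne_zero intα) hαβ)
  have hdvdX : X ∣ R := X_dvd_iff.2 (by rwa [coeff_zero_eq_eval_zero])
  exact hXαβ.mul_dvd (hXα.mul_dvd (hX.mul_dvd hdvdX (dvd_iff_isRoot.2 h1))
    (minpoly.dvd K α hα')) (minpoly.dvd K β hβ')

theorem evalPlaces_injective {α : E} {β : F} (hα : 1 < (minpoly K α).natDegree)
    (hαβ : (minpoly K α).natDegree < (minpoly K β).natDegree) {n : ℕ}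
    (hn : (minpoly K α).natDegree + (minpoly K β).natDegree + 2 = n) :
    Function.Injective (evalPlaces n α β ∘ₗ (degreeLT K (n + 1)).subtype) := by
  refine (injective_iff_map_eq_zero _).2 fun ⟨R, hR⟩ h => Subtype.ext (show R = 0 from ?_)
  have hinf : R.coeff n = 0 := congrArg (fun v => v.2.2.1) h
  have intα := isIntegral_of_natDegree_minpoly_ne_zero (K := K) (α := α) (by omega)
  have intβ := isIntegral_of_natDegree_minpoly_ne_zero (K := K) (α := β) (by omega)
  by_contra hR0
  have hlt : R.natDegree < n := (mem_degreeLT_add_one.1 hR).lt_of_ne fun he =>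
    hR0 (leadingCoeff_eq_zero.1 (by rwa [leadingCoeff, he]))
  refine hR0 (eq_zero_of_dvd_of_natDegree_lt (dvd_of_evalPlaces_eq_zero hα hαβ h) ?_)
  have hXX := monic_X.mul (monic_X_sub_C (1 : K))
  rw [(hXX.mul (minpoly.monic intα)).natDegree_mul (minpoly.monic intβ),
    hXX.natDegree_mul (minpoly.monic intα), monic_X.natDegree_mul (monic_X_sub_C 1),
    natDegree_X, natDegree_X_sub_C]
  omega

theorem exists_mul_factors_through_places [FiniteDimensional K E] [Algebra.IsSeparable K E]
    [FiniteDimensional K F] [Algebra.IsSeparable K F] [FiniteDimensional K L]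
    [Algebra.IsSeparable K L] {n : ℕ} (hL : finrank K L = n + 1) (hE : 1 < finrank K E)
    (hEF : finrank K E < finrank K F) (hn : finrank K E + finrank K F + 2 = n + n) :
    ∃ (σ : L →ₗ[K] K × K × K × E × F) (π : (K × K × K × E × F) →ₗ[K] L),
      ∀ x y, π (σ x * σ y) = x * y := by
  obtain ⟨α, hα⟩ := exists_minpoly_natDegree_eq_finrank K E
  obtain ⟨β, hβ⟩ := exists_minpoly_natDegree_eq_finrank K F
  obtain ⟨γ, hγ⟩ := exists_minpoly_natDegree_eq_finrank K L
  let eL : degreeLT K (n + 1) ≃ₗ[K] L :=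
    ((aeval γ).toLinearMap ∘ₗ (degreeLT K (n + 1)).subtype).linearEquivOfInjective
      (aeval_injective_degreeLT (hγ.trans hL)) (by rw [finrank_degreeLT, hL])
  let eP : degreeLT K (n + n + 1) ≃ₗ[K] K × K × K × E × F :=
    (evalPlaces (n + n) α β ∘ₗ (degreeLT K (n + n + 1)).subtype).linearEquivOfInjective
      (evalPlaces_injective (hα ▸ hE) (hα ▸ hβ ▸ hEF) (by omega))
      (by simp [finrank_degreeLT, finrank_prod]; omega)
  refine ⟨evalPlaces n α β ∘ₗ (degreeLT K (n + 1)).subtype ∘ₗ eL.symm,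
    (aeval γ).toLinearMap ∘ₗ (degreeLT K (n + n + 1)).subtype ∘ₗ eP.symm, fun x y => ?_⟩
  set P := eL.symm x
  set Q := eL.symm y
  have hP := mem_degreeLT_add_one.1 P.2
  have hQ := mem_degreeLT_add_one.1 Q.2
  have hPQ : (P * Q : K[X]) ∈ degreeLT K (n + n + 1) :=
    mem_degreeLT_add_one.2 (natDegree_mul_le_of_le hP hQ)
  calc aeval γ (eP.symm (evalPlaces n α β P * evalPlaces n α β Q) : K[X])
      = aeval γ (P * Q : K[X]) := by
        rw [← evalPlaces_mul α β hP hQ]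
        exact congrArg (aeval γ ∘ Subtype.val) (eP.symm_apply_apply ⟨_, hPQ⟩)
    _ = eL P * eL Q := map_mul _ _ _
    _ = x * y := by simp only [P, Q, LinearEquiv.apply_symm_apply]

end Interpolation

theorem bilinear_mul_F2_5_general
    (K : Type*) [Field K] [Fintype K]
    (M₂ : Type*) [Field M₂] [Algebra K M₂] (hM₂ : Module.finrank K M₂ = 2)
    (M₄ : Type*) [Field M₄] [Algebra K M₄] (hM₄ : Module.finrank K M₄ = 4)
    (L : Type*) [Field L] [Algebra K L] (hL : Module.finrank K L = 5)
    (r₂ r₄ : ℕ) (hr₂ : HasBilinearMulAlg K M₂ r₂) (hr₄ : HasBilinearMulAlg K M₄ r₄) :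
    HasBilinearMulAlg K L (3 + 2 * r₂ + r₄) := by
  have : FiniteDimensional K M₂ := Module.finite_of_finrank_eq_succ hM₂
  have : FiniteDimensional K M₄ := Module.finite_of_finrank_eq_succ hM₄
  have : FiniteDimensional K L := Module.finite_of_finrank_eq_succ hL
  obtain ⟨σ, π, hσπ⟩ := exists_mul_factors_through_places (E := M₂) (F := M₄) (n := 4)
    hL (by omega) (by omega) (by omega)
  have hprod : HasBilinearMulAlg K (K × K × K × M₂ × M₄) (1 + (1 + (1 + (r₂ + r₄)))) :=
    HasBilinearMulAlg.self.prod (HasBilinearMulAlg.self.prod (HasBilinearMulAlg.self.prod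
      (hr₂.prod hr₄)))
  exact (hprod.of_mul_factors_through σ π hσπ).mono_s8 (by omega)

/-- Section 7 of the paper: interpolating at 3 places of degree 1, 2 places of degree 2
and 1 place of degree 4 of the genus-2 curve `y² + y = x/(x³+x+1)` over `F_2`, bilinear
multiplication algorithms for `F_4` over `F_2` (modelled by `M₂`) with `r₂`
multiplications and for `F_16` over `F_2` (modelled by `M₄`) with `r₄` multiplications
yield one for `F_{2^5} = F_32` (modelled by `L`) with `3 + 2·r₂ + r₄` bilinear
multiplications; in particular `μ_2(5) ≤ 3·μ_2(1) + 2·μ_2(2) + μ_2(4)`. -/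
theorem bilinear_mul_F2_5
    (K : Type*) [Field K] [Fintype K] (hK : Fintype.card K = 2)
    (M₂ : Type*) [Field M₂] [Algebra K M₂] (hM₂ : Module.finrank K M₂ = 2)
    (M₄ : Type*) [Field M₄] [Algebra K M₄] (hM₄ : Module.finrank K M₄ = 4)
    (L : Type*) [Field L] [Algebra K L] (hL : Module.finrank K L = 5)
    (r₂ r₄ : ℕ) (hr₂ : HasBilinearMulAlg K M₂ r₂) (hr₄ : HasBilinearMulAlg K M₄ r₄) :
    HasBilinearMulAlg K L (3 + 2 * r₂ + r₄) :=
  bilinear_mul_F2_5_general K M₂ hM₂ M₄ hM₄ L hL r₂ r₄ hr₂ hr₄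
end

section
/- The polynomial Q(X) = X⁵ + X³ + 1 ∈ F₂[X] is irreducible over F₂, and for every root α of Q in the field F₃₂ with 32 elements, α³ + α + 1 ≠ 0 and there exists y ∈ F₂(α) = F₃₂ with (y² + y)(α³ + α + 1) = α (equivalently, the absolute trace Tr_{F₃₂/F₂}(α/(α³ + α + 1)) = 0). -/
open Polynomial

private noncomputable def Qpoly : Polynomial (ZMod 2) := X ^ 5 + X ^ 3 + 1

private noncomputable def Cpoly : Polynomial (ZMod 2) :=
  X^27 + X^25 + X^23 + X^22 + X^21 + X^19 + X^18 + X^14 + X^13 + X^12 + X^11 + X^10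
    + X^7 + X^6 + X^4 + X

private lemma two_eq_zero_polyZMod2 : (2 : Polynomial (ZMod 2)) = 0 := by
  rw [← map_ofNat (Polynomial.C : ZMod 2 →+* Polynomial (ZMod 2)) 2]
  simp [show (2 : ZMod 2) = 0 by decide]

private lemma QC_eq : Qpoly * Cpoly = X ^ 32 + X := by
  unfold Qpoly Cpoly
  linear_combination (X^30 + X^28 + X^27 + X^26 + X^25 + X^24 + X^23 + X^22 + X^21 + X^19
    + X^18 + X^17 + X^16 + X^15 + X^14 + X^13 + X^12 + X^11 + X^10 + X^9 + X^7 + X^6 + X^4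
    : Polynomial (ZMod 2)) * two_eq_zero_polyZMod2

set_option maxHeartbeats 2000000 in
/-- Section 7 of the paper: the polynomial `Q(X) = X⁵ + X³ + 1` is irreducible over `F₂`,
and for every root `α` of `Q` in the field `F₃₂` with 32 elements (modelled by `L`), the
denominator `α³ + α + 1` is nonzero and the Artin–Schreier equation
`(y² + y)(α³ + α + 1) = α` is solvable in `F₂(α) = F₃₂` (equivalently, the absolute trace
of `α/(α³ + α + 1)` vanishes), so the place `(Q(x))` splits totally in the function field
of `y² + y = x/(x³ + x + 1)` over `F₂`. -/
theorem splitting_place_F2_5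
    (L : Type*) [Field L] [Fintype L] (hL : Fintype.card L = 32) :
    Irreducible (Polynomial.X ^ 5 + Polynomial.X ^ 3 + 1 : Polynomial (ZMod 2)) ∧
      ∀ α : L, α ^ 5 + α ^ 3 + 1 = 0 →
        α ^ 3 + α + 1 ≠ 0 ∧ ∃ y : L, (y ^ 2 + y) * (α ^ 3 + α + 1) = α := by
  -- characteristic 2
  have h32 : ((32 : ℕ) : L) = 0 := by
    rw [← hL]; exact FiniteField.cast_card_eq_zero L
  have h2 : (2 : L) = 0 := by
    have h25 : (2 : L) ^ 5 = 0 := by push_cast at h32 ⊢; linear_combination h32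
    exact pow_eq_zero_iff (by norm_num) |>.mp h25
  have hcharL : CharP L 2 := by
    classical
    have hchar := ringChar.charP L
    have hdvd : ringChar L ∣ 2 := ringChar.dvd (by exact_mod_cast h2)
    rcases (Nat.dvd_prime Nat.prime_two).mp hdvd with h1 | h1
    · rw [h1] at hchar
      haveI := hchar
      exact absurd rfl (CharP.char_ne_one L 1)
    · rw [← h1]; exact ringChar.charP L
  haveI := hcharL
  haveI : Algebra (ZMod 2) L := ZMod.algebra L 2
  -- a root of Q exists in L
  have hpowcard : ∀ a : L, a ^ 32 = a := fun a => by
    rw [← hL]; exact FiniteField.pow_card a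
  classical
  have hrootex : ∃ a : L, a ^ 5 + a ^ 3 + 1 = 0 := by
    by_contra hno
    push_neg at hno
    have hCroot : ∀ a : L, aeval a Cpoly = 0 := by
      intro a
      have h0 : aeval a Qpoly * aeval a Cpoly = 0 := by
        rw [← map_mul, QC_eq, map_add, map_pow, aeval_X, hpowcard a]
        linear_combination a * h2
      have hQa : aeval a Qpoly ≠ 0 := by
        unfold Qpoly
        simpa using hno a
      exact (mul_eq_zero.mp h0).resolve_left hQa
    -- Cpoly maps to a nonzero polynomial of degree ≤ 27 with 32 roots
    have hinj : Function.Injective (algebraMap (ZMod 2) L) :=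
      (algebraMap (ZMod 2) L).injective
    set Cl := Cpoly.map (algebraMap (ZMod 2) L) with hCl
    have hCne : Cpoly ≠ 0 := by
      intro h
      have := QC_eq
      rw [h, mul_zero] at this
      have h1 : (X ^ 32 + X : Polynomial (ZMod 2)).coeff 1 = 0 := by rw [← this]; simp
      simp at h1
    have hClne : Cl ≠ 0 := (Polynomial.map_ne_zero_iff hinj).mpr hCne
    have hdeg : Cl.natDegree ≤ 27 := by
      refine le_trans Polynomial.natDegree_map_le ?_
      unfold Cpoly
      compute_degree
    have hsub : Finset.univ ⊆ Cl.roots.toFinset := by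
      intro a _
      rw [Multiset.mem_toFinset, Polynomial.mem_roots hClne]
      show Polynomial.eval a Cl = 0
      rw [hCl, Polynomial.eval_map, ← Polynomial.aeval_def]
      exact hCroot a
    have hcard : 32 ≤ Cl.roots.toFinset.card := by
      calc (32 : ℕ) = Fintype.card L := hL.symm
        _ = Finset.univ.card := (Finset.card_univ).symm
        _ ≤ Cl.roots.toFinset.card := Finset.card_le_card hsub
    have : Cl.roots.toFinset.card ≤ 27 := by
      calc Cl.roots.toFinset.card ≤ Multiset.card Cl.roots := Multiset.toFinset_card_le _
        _ ≤ Cl.natDegree := Polynomial.card_roots' Cl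
        _ ≤ 27 := hdeg
    omega
  obtain ⟨α₀, hα₀⟩ := hrootex
  -- the minimal polynomial of α₀ is Qpoly
  have hmonicQ : Qpoly.Monic := by
    unfold Qpoly
    monicity!
  have hdegQ : Qpoly.natDegree = 5 := by
    unfold Qpoly
    compute_degree!
  have hint : IsIntegral (ZMod 2) α₀ := IsIntegral.of_finite (ZMod 2) α₀
  have haev : aeval α₀ Qpoly = 0 := by
    unfold Qpoly; simpa using hα₀
  have hdvdQ : minpoly (ZMod 2) α₀ ∣ Qpoly := minpoly.dvd _ _ haev
  have hfinrank : Module.finrank (ZMod 2) L = 5 := by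
    have hc : Fintype.card L = Fintype.card (ZMod 2) ^ Module.finrank (ZMod 2) L :=
      Module.card_eq_pow_finrank
    rw [hL] at hc
    have : (32 : ℕ) = 2 ^ Module.finrank (ZMod 2) L := by simpa using hc
    have h5 : (2 : ℕ) ^ 5 = 2 ^ Module.finrank (ZMod 2) L := by omega
    exact (Nat.pow_right_injective (le_refl 2) h5).symm
  have hdegdvd : (minpoly (ZMod 2) α₀).natDegree ∣ 5 := hfinrank ▸ minpoly.degree_dvd hint
  have hdeg15 : (minpoly (ZMod 2) α₀).natDegree = 1 ∨ (minpoly (ZMod 2) α₀).natDegree = 5 :=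
    (Nat.Prime.eq_one_or_self_of_dvd (by norm_num) _ hdegdvd)
  have hnot1 : (minpoly (ZMod 2) α₀).natDegree ≠ 1 := by
    intro h1
    obtain ⟨c, hc⟩ := (minpoly.natDegree_eq_one_iff).mp h1
    -- c : ZMod 2, so α₀ = 0 or 1
    have hcc : ∀ x : ZMod 2, x = 0 ∨ x = 1 := by decide
    rcases hcc c with rfl | rfl
    · rw [map_zero] at hc
      rw [← hc] at hα₀
      simp at hα₀
    · rw [map_one] at hc
      rw [← hc] at hα₀
      simp at hα₀
      exact one_ne_zero (by linear_combination hα₀ - h2)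
  have hdeg5 : (minpoly (ZMod 2) α₀).natDegree = 5 := hdeg15.resolve_left hnot1
  have hminmonic : (minpoly (ZMod 2) α₀).Monic := minpoly.monic hint
  have hQeq : Qpoly = minpoly (ZMod 2) α₀ := by
    obtain ⟨k, hk⟩ := hdvdQ
    have hkne : k ≠ 0 := by
      intro h; rw [h, mul_zero] at hk
      exact (hmonicQ.ne_zero) hk
    have hdegk : k.natDegree = 0 := by
      have := Polynomial.natDegree_mul (hminmonic.ne_zero) hkne
      rw [← hk, hdegQ, hdeg5] at this
      omega
    have hkC : k = Polynomial.C (k.coeff 0) := Polynomial.eq_C_of_natDegree_eq_zero hdegk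
    have hlead : k.coeff 0 = 1 := by
      have := congrArg Polynomial.leadingCoeff hk
      rw [Polynomial.leadingCoeff_mul, hminmonic.leadingCoeff, one_mul, hmonicQ.leadingCoeff]
        at this
      rw [hkC, Polynomial.leadingCoeff_C] at this
      exact this.symm
    rw [hk, hkC, hlead, Polynomial.C_1, mul_one]
  have hirr : Irreducible (X ^ 5 + X ^ 3 + 1 : Polynomial (ZMod 2)) := by
    have := minpoly.irreducible hint
    rw [← hQeq] at this
    exact this
  refine ⟨hirr, fun α hroot => ?_⟩
  -- denominator nonzero
  have hd : α ^ 3 + α + 1 ≠ 0 := by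
    intro hd0
    have hα2 : α ^ 2 = 1 := by
      linear_combination hroot - α ^ 2 * hd0 + (α ^ 2 - 1) * h2
    have hsq : (α - 1) ^ 2 = 0 := by
      linear_combination hα2 + (1 - α) * h2
    have hα1 : α = 1 := by
      have h0 : α - 1 = 0 := pow_eq_zero_iff (n := 2) (by norm_num) |>.mp hsq
      linear_combination h0
    rw [hα1] at hd0
    exact one_ne_zero (by linear_combination hd0 - h2)
  refine ⟨hd, ?_⟩
  set d := α ^ 3 + α + 1 with hdd
  -- trace of α/d is zero
  have key : α * d ^ 15 + α ^ 2 * d ^ 14 + α ^ 4 * d ^ 12 + α ^ 8 * d ^ 8 + α ^ 16 = 0 := by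
    rw [hdd]
    linear_combination (α^41 + 15*α^39 + 15*α^38 + 104*α^37 + 208*α^36 + 548*α^35 + 1324*α^34
      + 2634*α^33 + 5591*α^32 + 10510*α^31 + 18836*α^30 + 32860*α^29 + 53264*α^28 + 83254*α^27
      + 124612*α^26 + 176812*α^25 + 241297*α^24 + 314826*α^23 + 391671*α^22 + 467145*α^21
      + 532004*α^20 + 577400*α^19 + 597993*α^18 + 588889*α^17 + 549775*α^16 + 485697*α^15
      + 404141*α^14 + 315143*α^13 + 228946*α^12 + 153608*α^11 + 94622*α^10 + 53239*α^9
      + 26967*α^8 + 12599*α^7 + 6329*α^6 + 3339*α^5 + 1081*α^4 + 235*α^3 + 216*α^2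
      - 947*α - 1590) * hroot
      + (214*α^4 + 737*α^3 - 100*α^2 + 474*α + 795) * h2
  obtain ⟨b, hb⟩ : ∃ b : L, α = b * d := ⟨α / d, (div_mul_cancel₀ α hd).symm⟩
  rw [hb] at key
  have h16 : d ^ 16 ≠ 0 := pow_ne_zero _ hd
  have htr : b + b ^ 2 + b ^ 4 + b ^ 8 + b ^ 16 = 0 := by
    refine mul_right_cancel₀ h16 ?_
    rw [zero_mul]
    linear_combination key
  refine ⟨b + b ^ 4 + b ^ 16, ?_⟩
  have hy : (b + b ^ 4 + b ^ 16) ^ 2 + (b + b ^ 4 + b ^ 16) = b := by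
    linear_combination hpowcard b + htr + (b ^ 5 + b ^ 17 + b ^ 20) * h2
  rw [hy]
  exact hb.symm
end
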